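/- arXiv:2603.28940 — 5 statements merged into one kernel-verified Lean document; each statement's English description precedes it below -/
import Mathlib

section
/- For all integers n ≥ 0 and d ≥ 1, ⟨n⟩_d! = (n! · (n+1)! · (n+2)! ⋯ (n+d-1)!) / ((d!)^n · 0! · 1! · 2! ⋯ (d-1)!). -/
/-- The n-th simplicial d-polytopic number ⟨n⟩_d = C(n+d-1, d). -/
def sp (d n : ℕ) : ℕ := Nat.choose (n + d - 1) d

/-- The d-simplitorial ⟨n⟩_d! = ∏_{k=1}^n ⟨k⟩_d, as a rational number. -/
def spFact (d n : ℕ) : ℚ := ∏ k ∈ Finset.Icc 1 n, (sp d k : ℚ)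

theorem spFact_factorial_formula (d n : ℕ) (hd : 1 ≤ d) :
    spFact d n =
      (∏ i ∈ Finset.range d, (Nat.factorial (n + i) : ℚ)) /
        ((Nat.factorial d : ℚ) ^ n * ∏ i ∈ Finset.range d, (Nat.factorial i : ℚ)) := by
  induction n with
  | zero =>
      simp only [spFact, Nat.zero_add, pow_zero, one_mul, show Finset.Icc 1 0 = ∅ from rfl,
        Finset.prod_empty]
      rw [eq_comm, div_self]
      exact Finset.prod_ne_zero_iff.mpr fun i _ => by exact_mod_cast Nat.factorial_ne_zero i
  | succ n ih =>
      have hQ : (∏ i ∈ Finset.range d, (Nat.factorial i : ℚ)) ≠ 0 := by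
        apply Finset.prod_ne_zero_iff.mpr
        intro i _
        exact_mod_cast (Nat.factorial_ne_zero i)
      have hdf : ((Nat.factorial d : ℚ)) ≠ 0 := by
        exact_mod_cast Nat.factorial_ne_zero d
      have hnf : ((Nat.factorial n : ℚ)) ≠ 0 := by
        exact_mod_cast Nat.factorial_ne_zero n
      have hstep : spFact d (n + 1) = spFact d n * (Nat.choose (n + d) d : ℚ) := by
        rw [spFact, Finset.prod_Icc_succ_top (Nat.le_add_left 1 n)]
        congr 2
        simp [sp, Nat.succ_add, Nat.add_sub_cancel]
      have hchoose : (Nat.choose (n + d) d : ℚ) =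
          (Nat.factorial (n + d) : ℚ) / ((Nat.factorial d : ℚ) * (Nat.factorial n : ℚ)) := by
        rw [Nat.cast_choose ℚ (Nat.le_add_left d n)]
        simp
      have htel : (∏ i ∈ Finset.range d, (Nat.factorial (n + i) : ℚ)) *
            (Nat.factorial (n + d) : ℚ) =
          (Nat.factorial n : ℚ) * ∏ i ∈ Finset.range d, (Nat.factorial (n + 1 + i) : ℚ) := by
        have h1 : ∏ i ∈ Finset.range (d + 1), (Nat.factorial (n + i) : ℚ) =
            (∏ i ∈ Finset.range d, (Nat.factorial (n + i) : ℚ)) * (Nat.factorial (n + d) : ℚ) :=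
          Finset.prod_range_succ _ d
        have h2 : ∏ i ∈ Finset.range (d + 1), (Nat.factorial (n + i) : ℚ) =
            (∏ i ∈ Finset.range d, (Nat.factorial (n + (i + 1)) : ℚ)) * (Nat.factorial (n + 0) : ℚ) :=
          Finset.prod_range_succ' _ d
        rw [h1] at h2
        rw [h2]
        have he : (∏ i ∈ Finset.range d, (Nat.factorial (n + (i + 1)) : ℚ)) =
            ∏ i ∈ Finset.range d, (Nat.factorial (n + 1 + i) : ℚ) :=
          Finset.prod_congr rfl fun i _ => by rw [show n + (i + 1) = n + 1 + i by omega]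
        rw [he, mul_comm]
        norm_num
      rw [hstep, ih, hchoose]
      rw [div_mul_div_comm, pow_succ]
      rw [div_eq_div_iff (by positivity) (by positivity)]
      linear_combination ((Nat.factorial d : ℚ))^n * (Nat.factorial d : ℚ) *
        (∏ i ∈ Finset.range d, (Nat.factorial i : ℚ)) * htel
end

section
/- For all 0 ≤ k ≤ n and d ≥ 1, the d-Hoggatt binomial coefficient ⟨n choose k⟩_d = ⟨n⟩_d! / (⟨k⟩_d! · ⟨n-k⟩_d!) equals ∏_{i=0}^{d-1} (i! · (n+i)!) / ((k+i)! · (n-k+i)!). -/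
/-- The d-Hoggatt binomial coefficient ⟨n choose k⟩_d. -/
def hog (d n k : ℕ) : ℚ := spFact d n / (spFact d k * spFact d (n - k))

/-!
Each `⟨n + 1⟩_d = (n + d)! / (d! n!)` is a quotient of factorials, and `(n + d)! / n!` is in turn
the telescoping quotient of `∏ i < d, (n + 1 + i)!` by `∏ i < d, (n + i)!`. Hence
`⟨n⟩_d! · d!ⁿ · ∏ i < d, i! = ∏ i < d, (n + i)!`, and in the Hoggatt quotient the powers of `d!`
cancel because `k + (n - k) = n`.
-/

open Finset Nat

theorem sp_succ_mul_factorial_mul_factorial (d n : ℕ) :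
    sp d (n + 1) * d ! * n ! = (n + d)! := by
  have h := choose_mul_factorial_mul_factorial (le_add_left d n)
  rw [Nat.add_sub_cancel] at h
  rwa [sp, Nat.add_right_comm, Nat.add_sub_cancel]

theorem spFact_succ (d n : ℕ) : spFact d (n + 1) = spFact d n * sp d (n + 1) :=
  prod_Icc_succ_top (Nat.le_add_left 1 n) _

theorem prod_factorial_mul_factorial (n d : ℕ) :
    (∏ i ∈ range d, (n + i)!) * (n + d)! = n ! * ∏ i ∈ range d, (n + 1 + i)! := by
  rw [← prod_range_succ, prod_range_succ', add_zero, mul_comm]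
  exact congrArg _ (prod_congr rfl fun i _ => by rw [add_assoc, add_comm 1 i])

theorem spFact_mul_pow_mul_prod_factorial (d n : ℕ) :
    spFact d n * (d ! : ℚ) ^ n * ∏ i ∈ range d, (i ! : ℚ) = ∏ i ∈ range d, ((n + i)! : ℚ) := by
  induction n with
  | zero => simp [spFact]
  | succ n ih =>
    have hn : (n ! : ℚ) ≠ 0 := by positivity
    apply mul_left_cancel₀ hn
    calc (n ! : ℚ) * (spFact d (n + 1) * (d ! : ℚ) ^ (n + 1) * ∏ i ∈ range d, (i ! : ℚ))
        = (spFact d n * (d ! : ℚ) ^ n * ∏ i ∈ range d, (i ! : ℚ)) *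
            (sp d (n + 1) * d ! * n ! : ℕ) := by
          rw [spFact_succ]; push_cast; ring
      _ = (n ! : ℚ) * ∏ i ∈ range d, ((n + 1 + i)! : ℚ) := by
          rw [ih, sp_succ_mul_factorial_mul_factorial]
          exact_mod_cast prod_factorial_mul_factorial n d

theorem spFact_eq_prod_factorial_div (d n : ℕ) :
    spFact d n =
      (∏ i ∈ range d, ((n + i)! : ℚ)) / ((d ! : ℚ) ^ n * ∏ i ∈ range d, (i ! : ℚ)) := by
  rw [eq_div_iff (by positivity), ← mul_assoc, spFact_mul_pow_mul_prod_factorial]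

theorem hog_product_formula_general (d n k : ℕ) (hk : k ≤ n) :
    hog d n k =
      ∏ i ∈ Finset.range d,
        ((Nat.factorial i : ℚ) * (Nat.factorial (n + i) : ℚ)) /
          ((Nat.factorial (k + i) : ℚ) * (Nat.factorial (n - k + i) : ℚ)) := by
  have hpow : (d ! : ℚ) ^ k * (d ! : ℚ) ^ (n - k) = (d ! : ℚ) ^ n := by
    rw [← pow_add, Nat.add_sub_cancel' hk]
  simp only [hog, spFact_eq_prod_factorial_div]
  rw [prod_div_distrib, prod_mul_distrib, prod_mul_distrib, ← hpow]
  field_simp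

theorem hog_product_formula (d n k : ℕ) (hd : 1 ≤ d) (hk : k ≤ n) :
    hog d n k =
      ∏ i ∈ Finset.range d,
        ((Nat.factorial i : ℚ) * (Nat.factorial (n + i) : ℚ)) /
          ((Nat.factorial (k + i) : ℚ) * (Nat.factorial (n - k + i) : ℚ)) :=
  hog_product_formula_general d n k hk
end

section
/- For 1 ≤ k ≤ n, C(n+1,k)·C(n+2,k) = ((n+2+k)/(n+2-k))·C(n,k)·C(n+1,k) + ((k+1)/k)·C(n,k-1)·C(n+1,k-1). -/
theorem binomial_pascal_identity (n k : ℕ) (hk1 : 1 ≤ k) (hk : k ≤ n) :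
    (Nat.choose (n + 1) k : ℚ) * (Nat.choose (n + 2) k : ℚ) =
      (((n : ℚ) + 2 + k) / ((n : ℚ) + 2 - k)) *
          (Nat.choose n k : ℚ) * (Nat.choose (n + 1) k : ℚ) +
        (((k : ℚ) + 1) / (k : ℚ)) *
          (Nat.choose n (k - 1) : ℚ) * (Nat.choose (n + 1) (k - 1) : ℚ) := by
  obtain ⟨j, rfl⟩ : ∃ j, k = j + 1 := ⟨k - 1, (Nat.succ_pred_eq_of_pos hk1).symm⟩
  obtain ⟨l, rfl⟩ : ∃ l, n = j + 1 + l := ⟨n - (j+1), (Nat.add_sub_cancel' hk).symm⟩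
  simp only [Nat.add_sub_cancel]
  have e1 : (j + 1 + l).choose (j + 1) = Nat.choose (j + l + 1) (j+1) := by ring_nf
  have e2 : (j + 1 + l + 1).choose (j + 1) = Nat.choose (j + l + 2) (j+1) := by ring_nf
  have e3 : (j + 1 + l + 2).choose (j + 1) = Nat.choose (j + l + 3) (j+1) := by ring_nf
  have e4 : (j + 1 + l).choose j = Nat.choose (j + l + 1) j := by ring_nf
  have e5 : (j + 1 + l + 1).choose j = Nat.choose (j + l + 2) j := by ring_nf
  rw [e1, e2, e3, e4, e5,
    Nat.cast_choose ℚ (by omega : j + 1 ≤ j + l + 1),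
    Nat.cast_choose ℚ (by omega : j + 1 ≤ j + l + 2),
    Nat.cast_choose ℚ (by omega : j + 1 ≤ j + l + 3),
    Nat.cast_choose ℚ (by omega : j ≤ j + l + 1),
    Nat.cast_choose ℚ (by omega : j ≤ j + l + 2)]
  have s1 : j + l + 1 - (j + 1) = l := by omega
  have s2 : j + l + 2 - (j + 1) = l + 1 := by omega
  have s3 : j + l + 3 - (j + 1) = l + 2 := by omega
  have s4 : j + l + 1 - j = l + 1 := by omega
  have s5 : j + l + 2 - j = l + 2 := by omega
  rw [s1, s2, s3, s4, s5]
  have f1 : ((j + l + 3).factorial : ℚ) = (j + l + 3) * (j + l + 2) * (j + l + 1) * (j+l).factorial := by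
    push_cast [show j+l+3 = (j+l)+3 from rfl, Nat.factorial_succ]; ring
  have f2 : ((j + l + 2).factorial : ℚ) = (j + l + 2) * (j + l + 1) * (j+l).factorial := by
    push_cast [show j+l+2 = (j+l)+2 from rfl, Nat.factorial_succ]; ring
  have f3 : ((j + l + 1).factorial : ℚ) = (j + l + 1) * (j+l).factorial := by
    push_cast [Nat.factorial_succ]; ring
  have f4 : ((j + 1).factorial : ℚ) = (j + 1) * j.factorial := by push_cast [Nat.factorial_succ]; ring
  have f5 : ((l + 2).factorial : ℚ) = (l + 2) * (l + 1) * l.factorial := by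
    push_cast [show l+2 = l+1+1 from rfl, Nat.factorial_succ]; ring
  have f6 : ((l + 1).factorial : ℚ) = (l + 1) * l.factorial := by push_cast [Nat.factorial_succ]; ring
  rw [f1, f2, f3, f4, f5, f6]
  have hjl : ((j + l).factorial : ℚ) ≠ 0 := by positivity
  have hj : ((j).factorial : ℚ) ≠ 0 := by positivity
  have hl : ((l).factorial : ℚ) ≠ 0 := by positivity
  have hd : ((j:ℚ) + 1 + l) + 2 - ((j:ℚ)+1) ≠ 0 := by intro h; nlinarith [Nat.cast_nonneg (α := ℚ) l]
  push_cast
  field_simp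
  ring
end

section
/- For all integers n ≥ 0 and d ≥ 1, the operator D_{S_d} = Σ_{k=0}^{d-1} C(d-1,k) · (1/(k+1)!) · x^k · D^{k+1} applied to the monomial x^n gives ⟨n⟩_d · x^{n-1}, where D is the usual derivative and ⟨n⟩_d = binomial(n+d-1, d). -/
open Polynomial

/-- The simplicial d-polytopic derivative D_{S_d} on polynomials:
D_{S_d} p = Σ_{k=0}^{d-1} C(d-1,k)·(1/(k+1)!)·x^k·p^{(k+1)}. -/
noncomputable def DSd (d : ℕ) (p : ℚ[X]) : ℚ[X] :=
  ∑ k ∈ Finset.range d,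
    C ((Nat.choose (d - 1) k : ℚ) / (Nat.factorial (k + 1) : ℚ)) * X ^ k *
      (Polynomial.derivative^[k + 1] p)

/-! Since `(k+1)!⁻¹ · X^k · D^{k+1} X^n = C(n, k+1) · X^(n-1)`, the `k`-th term of `D_{S_d} X^n` is
`C(d-1, k) · C(n, k+1) · X^(n-1)`, and Vandermonde's identity sums these coefficients to
`C(n+d-1, d)`. -/

open Finset in
theorem Nat.sum_range_choose_mul_choose_succ (m n : ℕ) :
    ∑ k ∈ range (m + 1), m.choose k * n.choose (k + 1) = (n + m).choose (m + 1) := by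
  rw [Nat.add_choose_eq, Nat.sum_antidiagonal_succ, Nat.choose_succ_self, mul_zero, zero_add,
    Nat.sum_antidiagonal_eq_sum_range_succ (fun i j => n.choose (i + 1) * m.choose j)]
  refine sum_congr rfl fun k hk => ?_
  rw [mul_comm, Nat.choose_symm (mem_range_succ_iff.mp hk)]

theorem Polynomial.X_pow_mul_iterate_derivative_X_pow {R : Type*} [CommSemiring R] (k n : ℕ) :
    X ^ k * derivative^[k + 1] (X ^ n : R[X]) = C (n.descFactorial (k + 1) : R) * X ^ (n - 1) := by
  rw [iterate_derivative_X_pow_eq_C_mul, mul_left_comm, ← pow_add]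
  rcases le_or_gt (k + 1) n with hkn | hnk
  · rw [show k + (n - (k + 1)) = n - 1 by omega]
  · rw [Nat.descFactorial_eq_zero_iff_lt.mpr hnk, Nat.cast_zero, map_zero, zero_mul, zero_mul]

theorem DSd_monomial (d n : ℕ) (hd : 1 ≤ d) :
    DSd d (X ^ n) = C (sp d n : ℚ) * X ^ (n - 1) := by
  obtain ⟨m, rfl⟩ := Nat.exists_eq_add_of_le' hd
  have hterm (k : ℕ) :
      C ((m.choose k : ℚ) / (k + 1).factorial) * X ^ k * derivative^[k + 1] (X ^ n) =
        C ((m.choose k * n.choose (k + 1) : ℕ) : ℚ) * X ^ (n - 1) := by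
    rw [mul_assoc, X_pow_mul_iterate_derivative_X_pow, ← mul_assoc, ← C_mul,
      Nat.descFactorial_eq_factorial_mul_choose]
    congr 2
    push_cast
    field_simp
  rw [DSd, Nat.add_sub_cancel]
  simp_rw [hterm]
  rw [← Finset.sum_mul, ← map_sum, ← Nat.cast_sum, Nat.sum_range_choose_mul_choose_succ, sp,
    Nat.add_succ_sub_one]
end

section
/- For all integers d ≥ 1 and real x, Σ_{k=0}^{d-1} C(d-1,k) x^k/(k+1)! = (1/(d! x)) Σ_{k=0}^{d} s(d,k) T_k(x), where s(d,k) are unsigned Stirling numbers of the first kind and T_k(x) = Σ_{i=0}^{k} S(k,i) x^i are the Touchard (Bell) polynomials with S(k,i) the Stirling numbers of the second kind. Equivalently, d!·x·Σ_{k=0}^{d-1} C(d-1,k) x^k/(k+1)! = Σ_{k=0}^{d} s(d,k) T_k(x) as polynomials in x. -/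
/-- Unsigned Stirling numbers of the first kind: s(n+1,k) = n·s(n,k) + s(n,k-1). -/
def stirling1 : ℕ → ℕ → ℕ
  | 0, 0 => 1
  | 0, _ + 1 => 0
  | n + 1, 0 => n * stirling1 n 0
  | n + 1, k + 1 => n * stirling1 n (k + 1) + stirling1 n k

/-- Stirling numbers of the second kind: S(n+1,k) = k·S(n,k) + S(n,k-1). -/
def stirling2 : ℕ → ℕ → ℕ
  | 0, 0 => 1
  | 0, _ + 1 => 0
  | _ + 1, 0 => 0
  | n + 1, k + 1 => (k + 1) * stirling2 n (k + 1) + stirling2 n k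

/-- The Touchard (Bell) polynomial T_k(x) = Σ_{i=0}^k S(k,i) x^i. -/
def touchard (k : ℕ) (x : ℝ) : ℝ :=
  ∑ i ∈ Finset.range (k + 1), (stirling2 k i : ℝ) * x ^ i

/-!
Expanding the Touchard polynomials, the right-hand side is `∑ᵢ (∑ₖ s(d,k) S(k,i)) xⁱ`. The inner
sums satisfy the recurrence of the unsigned Lah numbers `L(d,i)`, whose closed form
`L(d,i) = (d! / i!) C(d-1,i-1)` is exactly the coefficient of `xⁱ` on the left-hand side.
-/

open Finset
open scoped Nat

/-- Unsigned Lah numbers, written (like `stirling1`) so that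
`L(n+1,k) = (n+k) L(n,k) + L(n,k-1)` holds also at `k = 0`. -/
def lah : ℕ → ℕ → ℕ
  | 0, 0 => 1
  | 0, _ + 1 => 0
  | n + 1, 0 => n * lah n 0
  | n + 1, k + 1 => (n + k + 1) * lah n (k + 1) + lah n k

theorem lah_succ_zero (n : ℕ) : lah (n + 1) 0 = 0 := by
  induction n with
  | zero => rfl
  | succ n ih => rw [lah, ih, mul_zero]

theorem stirling2_eq_stirlingSecond : stirling2 = Nat.stirlingSecond := by
  funext n k
  induction n generalizing k with
  | zero => cases k <;> rfl
  | succ n ih => cases k <;> simp [stirling2, Nat.stirlingSecond_succ_succ, ih]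

theorem touchard_eq_sum_range {k N : ℕ} (hk : k < N) (x : ℝ) :
    touchard k x = ∑ i ∈ range N, (stirling2 k i : ℝ) * x ^ i := by
  refine sum_subset (range_subset_range.2 hk) fun i _ hi => ?_
  rw [stirling2_eq_stirlingSecond, Nat.stirlingSecond_eq_zero_of_lt (by simpa using hi)]
  simp

theorem sum_range_succ_stirling1_succ_mul (n N : ℕ) (f : ℕ → ℕ) :
    ∑ k ∈ range (N + 1), stirling1 (n + 1) k * f k =
      n * ∑ k ∈ range (N + 1), stirling1 n k * f k +
        ∑ k ∈ range N, stirling1 n k * f (k + 1) := by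
  simp only [sum_range_succ' _ N, stirling1, add_mul, sum_add_distrib, mul_add, mul_sum,
    mul_assoc]
  ring

theorem sum_mul_stirling2_succ_succ (N j : ℕ) (a : ℕ → ℕ) :
    ∑ k ∈ range N, a k * stirling2 (k + 1) (j + 1) =
      (j + 1) * ∑ k ∈ range N, a k * stirling2 k (j + 1) +
        ∑ k ∈ range N, a k * stirling2 k j := by
  simp only [stirling2, mul_sum, ← sum_add_distrib]
  exact sum_congr rfl fun k _ => by ring

theorem sum_stirling1_mul_stirling2 {n N : ℕ} (hN : n < N) (i : ℕ) :
    ∑ k ∈ range N, stirling1 n k * stirling2 k i = lah n i := by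
  obtain ⟨M, rfl⟩ : ∃ M, N = M + 1 := ⟨N - 1, by omega⟩
  induction n generalizing M i with
  | zero => cases i <;> simp [sum_range_succ', stirling1, stirling2, lah]
  | succ n ih =>
    obtain ⟨M, rfl⟩ : ∃ M', M = M' + 1 := ⟨M - 1, by omega⟩
    rw [sum_range_succ_stirling1_succ_mul, ih _ _ (by omega)]
    cases i with
    | zero => simp [stirling2, lah]
    | succ j =>
      rw [sum_mul_stirling2_succ_succ, ih _ _ (by omega), ih _ _ (by omega), lah]
      ring

theorem sum_stirling1_mul_touchard (n : ℕ) (x : ℝ) :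
    ∑ k ∈ range (n + 1), (stirling1 n k : ℝ) * touchard k x =
      ∑ i ∈ range (n + 1), (lah n i : ℝ) * x ^ i := by
  calc ∑ k ∈ range (n + 1), (stirling1 n k : ℝ) * touchard k x
      = ∑ i ∈ range (n + 1), ∑ k ∈ range (n + 1),
          (stirling1 n k : ℝ) * stirling2 k i * x ^ i := by
        rw [sum_comm]
        refine sum_congr rfl fun k hk => ?_
        rw [touchard_eq_sum_range (mem_range.1 hk), mul_sum]
        simp only [mul_assoc]
    _ = ∑ i ∈ range (n + 1), (lah n i : ℝ) * x ^ i := by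
        refine sum_congr rfl fun i _ => ?_
        rw [← sum_mul, ← sum_stirling1_mul_stirling2 n.lt_add_one i, Nat.cast_sum]
        simp only [Nat.cast_mul]

theorem add_two_mul_choose_add_choose (m j : ℕ) :
    (m + 2) * (m.choose j + m.choose (j + 1)) =
      (m + j + 3) * m.choose (j + 1) + (j + 2) * m.choose j := by
  have h := Nat.add_one_mul_choose_eq m j
  rw [Nat.choose_succ_succ] at h
  nlinarith

theorem lah_succ_succ_mul_factorial (n k : ℕ) :
    lah (n + 1) (k + 1) * (k + 1)! = (n + 1)! * n.choose k := by
  induction n generalizing k with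
  | zero => cases k <;> simp [lah]
  | succ n ih =>
    cases k with
    | zero =>
      have h : lah (n + 1) 1 = (n + 1)! := by simpa using ih 0
      rw [lah, lah_succ_zero, h, Nat.factorial_succ (n + 1)]
      simp
    | succ j =>
      calc lah (n + 2) (j + 2) * (j + 2)!
          = (n + j + 3) * (lah (n + 1) (j + 2) * (j + 2)!) +
              (j + 2) * (lah (n + 1) (j + 1) * (j + 1)!) := by
            rw [lah, Nat.factorial_succ (j + 1)]
            ring
        _ = (n + 1)! * ((n + j + 3) * n.choose (j + 1) + (j + 2) * n.choose j) := by
            rw [ih, ih]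
            ring
        _ = (n + 2)! * (n + 1).choose (j + 1) := by
            rw [← add_two_mul_choose_add_choose, Nat.choose_succ_succ, Nat.factorial_succ (n + 1)]
            ring

theorem kummer_touchard_identity (d : ℕ) (hd : 1 ≤ d) (x : ℝ) :
    (Nat.factorial d : ℝ) * x *
        ∑ k ∈ Finset.range d,
          (Nat.choose (d - 1) k : ℝ) * x ^ k / (Nat.factorial (k + 1) : ℝ) =
      ∑ k ∈ Finset.range (d + 1), (stirling1 d k : ℝ) * touchard k x := by
  obtain ⟨n, rfl⟩ : ∃ n, d = n + 1 := ⟨d - 1, by omega⟩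
  rw [sum_stirling1_mul_touchard, sum_range_succ' (fun i => (lah (n + 1) i : ℝ) * x ^ i),
    lah_succ_zero, Nat.add_sub_cancel, mul_sum]
  simp only [Nat.cast_zero, zero_mul, add_zero]
  refine sum_congr rfl fun k _ => ?_
  have h : (lah (n + 1) (k + 1) : ℝ) * (k + 1)! = (n + 1)! * n.choose k := by
    exact_mod_cast lah_succ_succ_mul_factorial n k
  field_simp
  linear_combination (-x ^ (k + 1)) * h
end
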